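/- The Jones monoid J_n is a regular ^R-semigroup: for every w ∈ J_n, w w^R w = w, where w^R is the image of w under the anti-automorphism of J_n fixing each generator h_i. -/

import Mathlib

namespace Origami

/-- Generators of the origami monoid: a type bit (`true` for α, `false` for β)
and an index in `Fin (n-1)` (so indices `1,…,n-1` are represented by `0,…,n-2`). -/
inductive Gen (n : ℕ) : Type
  | mk (t : Bool) (i : Fin (n - 1))
deriving DecidableEq

/-- Words over the generators. -/
abbrev W (n : ℕ) := FreeMonoid (Gen n)

/-- The word consisting of the single generator of type `t` and index `i`. -/
def go {n : ℕ} (t : Bool) (i : Fin (n - 1)) : W n := FreeMonoid.of (Gen.mk t i)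

/-- `|i - j| = 1`. -/
def adj {n : ℕ} (i j : Fin (n - 1)) : Prop := i.val + 1 = j.val ∨ j.val + 1 = i.val

/-- `|i - j| ≥ 2`. -/
def far {n : ℕ} (i j : Fin (n - 1)) : Prop := i.val + 2 ≤ j.val ∨ j.val + 2 ≤ i.val

/-- The defining relations (1)–(5), (1a), (2a), (3a) of the origami monoid. -/
inductive Rel (n : ℕ) : W n → W n → Prop
  | idem (t : Bool) (i : Fin (n - 1)) : Rel n (go t i * go t i) (go t i)
  | jones (t : Bool) (i j : Fin (n - 1)) (h : adj i j) :
      Rel n (go t i * go t j * go t i) (go t i)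
  | inter (t : Bool) (i j : Fin (n - 1)) (h : i ≠ j) :
      Rel n (go t i * go (!t) j) (go (!t) j * go t i)
  | intra (t : Bool) (i j : Fin (n - 1)) (h : far i j) :
      Rel n (go t i * go t j) (go t j * go t i)
  | idemA (t : Bool) (i : Fin (n - 1)) :
      Rel n (go t i * go (!t) i * (go t i * go (!t) i)) (go t i * go (!t) i)
  | jonesA (t : Bool) (i j : Fin (n - 1)) (h : adj i j) :
      Rel n (go t i * go (!t) i * (go t j * go (!t) j) * (go t i * go (!t) i))
            (go t i * go (!t) i)

/-- The congruence generated by the origami relations. -/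
def oriCon (n : ℕ) : Con (W n) := conGen (Rel n)

/-- The origami monoid `O_n`. -/
abbrev O (n : ℕ) := (oriCon n).Quotient

/-- The image of a generator in `O_n`. -/
def gen {n : ℕ} (t : Bool) (i : Fin (n - 1)) : O n := (oriCon n).mk' (go t i)

/-- The generator `α_i`. -/
def genA {n : ℕ} (i : Fin (n - 1)) : O n := gen true i

/-- The generator `β_i`. -/
def genB {n : ℕ} (i : Fin (n - 1)) : O n := gen false i

end Origami

namespace Jones

/-- Words for the Jones monoid: the generator `h_i` is indexed by `Fin (n-1)`. -/
abbrev JW (n : ℕ) := FreeMonoid (Fin (n - 1))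

/-- The defining relations of the Jones monoid `J_n`. -/
inductive JRel (n : ℕ) : JW n → JW n → Prop
  | idem (i : Fin (n - 1)) : JRel n (FreeMonoid.of i * FreeMonoid.of i) (FreeMonoid.of i)
  | jones (i j : Fin (n - 1)) (h : Origami.adj i j) :
      JRel n (FreeMonoid.of i * FreeMonoid.of j * FreeMonoid.of i) (FreeMonoid.of i)
  | comm (i j : Fin (n - 1)) (h : Origami.far i j) :
      JRel n (FreeMonoid.of i * FreeMonoid.of j) (FreeMonoid.of j * FreeMonoid.of i)

/-- The congruence generated by the Jones relations. -/
def jCon (n : ℕ) : Con (JW n) := conGen (JRel n)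

/-- The Jones monoid `J_n`. -/
abbrev J (n : ℕ) := (jCon n).Quotient

/-- The generator `h_i` of the Jones monoid. -/
def h {n : ℕ} (i : Fin (n - 1)) : J n := (jCon n).mk' (FreeMonoid.of i)

end Jones

/-!
Rewriting with the relations, every nonempty word equals a descending run
`D = h_i h_{i-1} ⋯ h_j`, where `h_j` occurs in the word, followed by a word `u` in letters
above `j`. Since `D^R D = h_j`, the identity `w w^R w = w` for `w = D u` reduces to the same
identity for `h_j u`, or for its reverse `u^R h_j`. Decompose `u^R = D' u'` in turn, with
bottom letter `j' > j`: if `j' ≥ j + 2`, then `h_j` commutes with all of `u^R`; if `j' = j + 1`,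
then `D'^R D' = h_{j+1}` lands between two copies of `h_j` and is absorbed by
`h_j h_{j+1} h_j = h_j`. Either way only shorter words are needed, so induction on the length
finishes the proof.
-/

namespace Jones

section Runs

variable {m : ℕ}

def down (i : Fin m) (t : ℕ) : Fin m := ⟨i - t, lt_of_le_of_lt (Nat.sub_le _ _) i.isLt⟩

@[simp] theorem val_down (i : Fin m) (t : ℕ) : (down i t).val = i.val - t := rfl

@[simp] theorem down_zero (i : Fin m) : down i 0 = i := rfl

theorem down_down (i : Fin m) (s t : ℕ) : down (down i s) t = down i (s + t) :=
  Fin.ext (Nat.sub_sub _ _ _)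

def run (i : Fin m) (k : ℕ) : List (Fin m) := (List.range k).map (down i)

theorem run_add (i : Fin m) (k l : ℕ) : run i (k + l) = run i k ++ run (down i k) l := by
  simp [run, List.range_add, Function.comp_def, down_down]

theorem run_succ (i : Fin m) (k : ℕ) : run i (k + 1) = run i k ++ [down i k] := by
  rw [run_add]; simp [run]

theorem run_succ' (i : Fin m) (k : ℕ) : run i (k + 1) = i :: run (down i 1) k := by
  rw [add_comm, run_add]; simp [run]

@[simp] theorem length_run (i : Fin m) (k : ℕ) : (run i k).length = k := by
  simp [run]

theorem le_of_mem_run {i x : Fin m} {k : ℕ} (hx : x ∈ run i k) : x.val ≤ i.val := by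
  obtain ⟨t, -, rfl⟩ := List.mem_map.1 hx
  exact Nat.sub_le _ _

theorem lt_of_mem_run {i x : Fin m} {k : ℕ} (hx : x ∈ run i k) : i.val < x.val + k := by
  obtain ⟨t, ht, rfl⟩ := List.mem_map.1 hx
  simp only [List.mem_range] at ht
  simp only [val_down]
  omega

end Runs

variable {n : ℕ}

theorem h_mul_self (i : Fin (n - 1)) : h i * h i = h i :=
  (Con.eq _).2 (ConGen.Rel.of _ _ (JRel.idem i))

theorem h_mul_h_mul_h {i j : Fin (n - 1)} (hij : Origami.adj i j) : h i * h j * h i = h i :=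
  (Con.eq _).2 (ConGen.Rel.of _ _ (JRel.jones i j hij))

theorem commute_h {i j : Fin (n - 1)} (hij : Origami.far i j) : Commute (h i) (h j) :=
  (Con.eq _).2 (ConGen.Rel.of _ _ (JRel.comm i j hij))

theorem h_mul_h_mul (i : Fin (n - 1)) (x : J n) : h i * (h i * x) = h i * x := by
  rw [← mul_assoc, h_mul_self]

theorem h_mul_h_mul_h_mul {i j : Fin (n - 1)} (hij : Origami.adj i j) (x : J n) :
    h i * (h j * (h i * x)) = h i * x := by
  rw [← mul_assoc, ← mul_assoc, h_mul_h_mul_h hij]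

def hprod (l : List (Fin (n - 1))) : J n := (l.map h).prod

@[simp] theorem hprod_nil : hprod ([] : List (Fin (n - 1))) = 1 := rfl

@[simp] theorem hprod_cons (i : Fin (n - 1)) (l : List (Fin (n - 1))) :
    hprod (i :: l) = h i * hprod l := List.prod_cons

@[simp] theorem hprod_singleton (i : Fin (n - 1)) : hprod [i] = h i := mul_one _

@[simp] theorem hprod_append (l l' : List (Fin (n - 1))) :
    hprod (l ++ l') = hprod l * hprod l' := by
  simp [hprod]

theorem exists_hprod_eq (w : J n) : ∃ l, hprod l = w := by
  induction w using Con.induction_on with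
  | H x =>
    refine ⟨x.toList, ?_⟩
    have : (jCon n).mk' = FreeMonoid.lift h := FreeMonoid.hom_eq fun _ => rfl
    rw [hprod, ← FreeMonoid.lift_apply, ← this]
    rfl

theorem commute_h_hprod {a : Fin (n - 1)} {l : List (Fin (n - 1))}
    (hl : ∀ x ∈ l, Origami.far a x) : Commute (h a) (hprod l) :=
  Commute.list_prod_right _ _ <| by simpa using fun x hx => commute_h (hl x hx)

theorem commute_hprod_hprod {s t : List (Fin (n - 1))}
    (hst : ∀ x ∈ s, ∀ y ∈ t, Origami.far x y) : Commute (hprod s) (hprod t) :=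
  Commute.list_prod_left _ _ <| by simpa using fun x hx => commute_h_hprod (hst x hx)

def reverseHom (n : ℕ) : J n →* (J n)ᵐᵒᵖ :=
  (jCon n).lift (FreeMonoid.lift fun i => MulOpposite.op (h i)) <| Con.conGen_le.2 <| by
    rintro _ _ (⟨i⟩ | ⟨i, j, hij⟩ | ⟨i, j, hij⟩)
    · simp [Con.ker_rel, ← MulOpposite.op_mul, h_mul_self]
    · simp [Con.ker_rel, ← MulOpposite.op_mul, ← mul_assoc, h_mul_h_mul_h hij]
    · simp [Con.ker_rel, ← MulOpposite.op_mul, (commute_h hij).eq]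

def rev (w : J n) : J n := (reverseHom n w).unop

@[simp] theorem rev_h (i : Fin (n - 1)) : rev (h i) = h i := rfl

@[simp] theorem rev_mul (v w : J n) : rev (v * w) = rev w * rev v := by
  simp [rev]

@[simp] theorem rev_one : rev (1 : J n) = 1 := by
  simp [rev]

@[simp] theorem rev_hprod (l : List (Fin (n - 1))) : rev (hprod l) = hprod l.reverse := by
  induction l with
  | nil => simp
  | cons i l ih => simp [ih]

theorem commute_rev {v w : J n} (hvw : Commute v w) : Commute (rev v) (rev w) := by
  rw [Commute, SemiconjBy, ← rev_mul, ← rev_mul, hvw.eq]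

theorem hprod_reverse_run_mul_hprod_run {i : Fin (n - 1)} {k : ℕ} (hk : k ≤ i.val) :
    hprod (run i (k + 1)).reverse * hprod (run i (k + 1)) = h (down i k) := by
  induction k with
  | zero => simp [run, h_mul_self]
  | succ k ih =>
    have hadj : Origami.adj (down i (k + 1)) (down i k) := Or.inl (by simp; omega)
    rw [run_succ i (k + 1)]
    simp only [List.reverse_append, List.reverse_singleton, hprod_append, hprod_cons,
      hprod_nil, mul_one]
    rw [← mul_assoc, mul_assoc _ (hprod _) (hprod _), ih (by omega), h_mul_h_mul_h hadj]

/-- `w` is equal in `J n` to the descending run from `i` to its bottom letter `down i r`,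
followed by a word `u` whose letters all lie above that bottom letter. -/
structure IsRunDecomp (w : List (Fin (n - 1))) (i : Fin (n - 1)) (r : ℕ)
    (u : List (Fin (n - 1))) : Prop where
  le_val : r ≤ i.val
  hprod_eq : hprod w = hprod (run i (r + 1)) * hprod u
  lt_of_mem : ∀ x ∈ u, i.val < x.val + r
  length_le : r + 1 + u.length ≤ w.length
  bottom_mem : down i r ∈ w

namespace IsRunDecomp

variable {w u : List (Fin (n - 1))} {i a : Fin (n - 1)} {r : ℕ}

theorem cons_of_lt (hd : IsRunDecomp w i r u) (ha : a.val + r < i.val) :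
    IsRunDecomp (a :: w) a 0 (run i (r + 1) ++ u) where
  le_val := Nat.zero_le _
  hprod_eq := by simp [hd.hprod_eq, run]
  lt_of_mem x hx := by
    rcases List.mem_append.1 hx with hx | hx
    · have := lt_of_mem_run hx; omega
    · have := hd.lt_of_mem x hx; omega
  length_le := by have := hd.length_le; simp; omega
  bottom_mem := List.mem_cons_self

theorem cons_of_eq_succ (hd : IsRunDecomp w i r u) (ha : a.val = i.val + 1) :
    IsRunDecomp (a :: w) a (r + 1) u where
  le_val := by have := hd.le_val; omega
  hprod_eq := by
    have hi : down a 1 = i := Fin.ext (by simp; omega)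
    rw [run_succ' a, hi, hprod_cons, hd.hprod_eq, hprod_cons, mul_assoc]
  lt_of_mem x hx := by have := hd.lt_of_mem x hx; omega
  length_le := by have := hd.length_le; simp; omega
  bottom_mem := by
    have hb : down a (r + 1) = down i r := Fin.ext (by simp; omega)
    exact hb ▸ List.mem_cons_of_mem _ hd.bottom_mem

theorem cons_self (hd : IsRunDecomp w i r u) : IsRunDecomp (i :: w) i r u where
  le_val := hd.le_val
  hprod_eq := by rw [hprod_cons, hd.hprod_eq, run_succ', hprod_cons, ← mul_assoc, ← mul_assoc,
    h_mul_self]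
  lt_of_mem := hd.lt_of_mem
  length_le := by have := hd.length_le; simp; omega
  bottom_mem := List.mem_cons_of_mem _ hd.bottom_mem

theorem cons_of_far (hd : IsRunDecomp w i r u) (ha : i.val + 2 ≤ a.val) :
    IsRunDecomp (a :: w) i r (a :: u) where
  le_val := hd.le_val
  hprod_eq := by
    have hc : Commute (h a) (hprod (run i (r + 1))) :=
      commute_h_hprod fun x hx => Or.inr (by have := le_of_mem_run hx; omega)
    rw [hprod_cons, hd.hprod_eq, ← mul_assoc, hc.eq, mul_assoc, hprod_cons]
  lt_of_mem x hx := by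
    rcases List.mem_cons.1 hx with rfl | hx
    · omega
    · exact hd.lt_of_mem x hx
  length_le := by have := hd.length_le; simp; omega
  bottom_mem := List.mem_cons_of_mem _ hd.bottom_mem

theorem cons_of_mem (hd : IsRunDecomp w i r u) (hai : i.val ≤ a.val + r) (ha : a.val < i.val) :
    IsRunDecomp (a :: w) a (a.val + r - i.val) (run i (i.val - a.val - 1) ++ u) where
  le_val := by have := hd.le_val; omega
  hprod_eq := by
    set s := i.val - a.val - 1 with hs
    set t := a.val + r - i.val with ht
    have hsplit : run i (r + 1) = run i s ++ down i s :: run a (t + 1) := by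
      have ha' : down (down i s) 1 = a := Fin.ext (by simp; omega)
      rw [show r + 1 = s + (t + 1 + 1) by omega, run_add, run_succ', ha']
    have hS : Commute (h a) (hprod (run i s)) :=
      commute_h_hprod fun x hx => Or.inl (by have := lt_of_mem_run hx; omega)
    have hSA : Commute (hprod (run i s)) (hprod (run a (t + 1))) :=
      commute_hprod_hprod fun x hx y hy =>
        Or.inr (by have := lt_of_mem_run hx; have := le_of_mem_run hy; omega)
    have hjones : h a * h (down i s) * hprod (run a (t + 1)) = hprod (run a (t + 1)) := by
      rw [run_succ' a, hprod_cons, ← mul_assoc, h_mul_h_mul_h (Or.inl (by simp; omega))]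
    calc hprod (a :: w)
        = h a * hprod (run i s) * (h (down i s) * hprod (run a (t + 1))) * hprod u := by
          simp [hd.hprod_eq, hsplit, mul_assoc]
      _ = hprod (run i s) * (h a * h (down i s) * hprod (run a (t + 1))) * hprod u := by
          rw [hS.eq]; simp only [mul_assoc]
      _ = hprod (run a (t + 1)) * hprod (run i s ++ u) := by
          rw [hjones, hSA.eq, hprod_append, mul_assoc]
  lt_of_mem x hx := by
    rcases List.mem_append.1 hx with hx | hx
    · have := lt_of_mem_run hx; omega
    · have := hd.lt_of_mem x hx; omega
  length_le := by have := hd.length_le; simp; omega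
  bottom_mem := by
    have hb : down a (a.val + r - i.val) = down i r := Fin.ext (by simp; omega)
    exact hb ▸ List.mem_cons_of_mem _ hd.bottom_mem

theorem hprod_reverse (hd : IsRunDecomp w i r u) :
    hprod w.reverse = hprod u.reverse * hprod (run i (r + 1)).reverse := by
  rw [← rev_hprod, hd.hprod_eq, rev_mul, rev_hprod, rev_hprod]

end IsRunDecomp

theorem exists_isRunDecomp (a : Fin (n - 1)) (w : List (Fin (n - 1))) :
    ∃ i r u, IsRunDecomp (a :: w) i r u := by
  induction w generalizing a with
  | nil => exact ⟨a, 0, [], by simp, by simp [run], by simp, by simp, by simp⟩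
  | cons b w ih =>
    obtain ⟨i, r, u, hd⟩ := ih b
    rcases lt_or_ge (a.val + r) i.val with hlt | hge
    · exact ⟨_, _, _, hd.cons_of_lt hlt⟩
    rcases lt_or_ge a.val i.val with hlt' | hge'
    · exact ⟨_, _, _, hd.cons_of_mem hge hlt'⟩
    by_cases hai : a = i
    · exact ⟨_, _, _, hai ▸ hd.cons_self⟩
    by_cases hsucc : a.val = i.val + 1
    · exact ⟨_, _, _, hd.cons_of_eq_succ hsucc⟩
    · exact ⟨_, _, _, hd.cons_of_far (by have := Fin.val_ne_of_ne hai; omega)⟩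

def IsRevRegular (l : List (Fin (n - 1))) : Prop :=
  hprod l * hprod l.reverse * hprod l = hprod l

theorem IsRevRegular.reverse {l : List (Fin (n - 1))} (hl : IsRevRegular l) :
    IsRevRegular l.reverse := by
  simpa [IsRevRegular, mul_assoc] using congrArg rev hl

theorem IsRevRegular.mul_right {l : List (Fin (n - 1))} (hl : IsRevRegular l) (x : J n) :
    hprod l * (hprod l.reverse * (hprod l * x)) = hprod l * x := by
  rw [← mul_assoc, ← mul_assoc, hl]

theorem isRevRegular_append_singleton {y : List (Fin (n - 1))} {j : Fin (n - 1)}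
    (ih : ∀ v : List (Fin (n - 1)), v.length ≤ y.length → IsRevRegular v)
    (hy : ∀ x ∈ y, j.val < x.val) : IsRevRegular (y ++ [j]) := by
  cases y with
  | nil => simp [IsRevRegular, h_mul_self]
  | cons b y =>
  obtain ⟨i, r, u, hd⟩ := exists_isRunDecomp b y
  have hbot := hy _ hd.bottom_mem
  have hu : IsRevRegular u := ih u (by have := hd.length_le; omega)
  have hju : Commute (h j) (hprod u) :=
    commute_h_hprod fun x hx => Or.inl (by have := hd.lt_of_mem x hx; simp at hbot; omega)
  have hjur : Commute (h j) (hprod u.reverse) := by simpa using commute_rev hju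
  unfold IsRevRegular
  simp only [List.reverse_append, List.reverse_singleton, hprod_append, hprod_singleton,
    mul_assoc]
  rcases Nat.lt_or_ge (j.val + 1) (i.val - r) with hfar | hadj
  · have hjY : Commute (h j) (hprod (b :: y)) := by
      rw [hd.hprod_eq, ← hprod_append]
      refine commute_h_hprod fun x hx => Or.inl ?_
      rcases List.mem_append.1 hx with hx | hx
      · have := lt_of_mem_run hx; have := hd.le_val; omega
      · have := hd.lt_of_mem x hx; omega
    have hjYr : Commute (h j) (hprod (b :: y).reverse) := by simpa using commute_rev hjY
    have hY := (ih (b :: y) le_rfl).mul_right (h j)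
    rw [h_mul_h_mul, hjYr.left_comm, hjY.left_comm, h_mul_self, hY]
  · have hadj : Origami.adj j (down i r) := Or.inl (by simp at hbot ⊢; omega)
    rw [hd.hprod_reverse, hd.hprod_eq]
    simp only [mul_assoc]
    -- with `D` the run and `U = hprod u`:
    -- `D U h_j U^R (D^R D) U h_j = D U U^R (h_j h_{j+1} h_j) U = D (U U^R U) h_j`
    rw [h_mul_h_mul, hjur.left_comm, ← mul_assoc (hprod (run i (r + 1)).reverse),
      hprod_reverse_run_mul_hprod_run hd.le_val, ← hju.eq, h_mul_h_mul_h_mul hadj, hju.eq,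
      hu.mul_right]

theorem isRevRegular_of_forall_shorter {w : List (Fin (n - 1))}
    (ih : ∀ v : List (Fin (n - 1)), v.length < w.length → IsRevRegular v) :
    IsRevRegular w := by
  cases w with
  | nil => simp [IsRevRegular]
  | cons a w =>
  obtain ⟨i, r, u, hd⟩ := exists_isRunDecomp a w
  have := hd.length_le
  have hju : h (down i r) * (hprod u * (hprod u.reverse * (h (down i r) * hprod u))) =
      h (down i r) * hprod u := by
    have hreg := isRevRegular_append_singleton (y := u.reverse) (j := down i r)
      (fun v hv => ih v (by simp at hv; omega))
      (fun x hx => by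
        have := hd.lt_of_mem x (List.mem_reverse.1 hx); have := hd.le_val; simp; omega)
    simpa [IsRevRegular, mul_assoc, h_mul_h_mul] using hreg.reverse
  unfold IsRevRegular
  rw [hd.hprod_reverse, hd.hprod_eq]
  simp only [mul_assoc]
  -- `D U U^R (D^R D) U = D' h_j U U^R h_j U` with `D = D' h_j`
  rw [← mul_assoc (hprod (run i (r + 1)).reverse), hprod_reverse_run_mul_hprod_run hd.le_val,
    run_succ i r, hprod_append, hprod_singleton, mul_assoc, hju, mul_assoc]

theorem isRevRegular (w : List (Fin (n - 1))) : IsRevRegular w :=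
  isRevRegular_of_forall_shorter fun v _ => isRevRegular v
termination_by w.length

end Jones

open Jones in
/-- The Jones monoid is a regular `^R`-semigroup: the reversal anti-automorphism `R`
(fixing each generator `h_i`) satisfies `w * R w * w = w` for every `w`. -/
theorem jones_regular_R (n : ℕ) :
    ∃ R : J n → J n,
      (∀ i, R (h i) = h i) ∧
      (∀ v w : J n, R (v * w) = R w * R v) ∧
      R 1 = 1 ∧
      (∀ w : J n, w * R w * w = w) := by
  refine ⟨rev, rev_h, rev_mul, rev_one, fun w => ?_⟩
  obtain ⟨l, rfl⟩ := exists_hprod_eq w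
  rw [rev_hprod]
  exact isRevRegular l
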